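/- With Y = diag(y_1, ..., y_m) and M the cycle-basis matrix of a connected graph G, det(M Y M^T) equals the first Symanzik polynomial Σ_{T ∈ ST(G)} Π_{e ∉ T} y_e, where the sum is over spanning trees T of G. -/

import Mathlib

open Finset Matrix
open scoped Classical

variable {V E : Type*}

/-- Two vertices are joined by an edge of the edge set `S`. -/
def adjRel (src tgt : E → V) (S : Finset E) (u v : V) : Prop :=
  ∃ e ∈ S, (src e = u ∧ tgt e = v) ∨ (src e = v ∧ tgt e = u)

/-- Reachability using only edges in `S`. -/
def reach (src tgt : E → V) (S : Finset E) : V → V → Prop :=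
  Relation.EqvGen (adjRel src tgt S)

/-- Number of connected components of the spanning subgraph with edge set `S`. -/
noncomputable def nComp (src tgt : E → V) (S : Finset E) : ℕ :=
  Nat.card (Quotient (Relation.EqvGen.setoid (adjRel src tgt S)))

/-- A spanning tree: connected spanning subgraph with `|V| - 1` edges. -/
def IsSpanningTree (src tgt : E → V) [Fintype V] (S : Finset E) : Prop :=
  nComp src tgt S = 1 ∧ S.card + 1 = Fintype.card V

/-- A spanning 2-forest: spanning subgraph with exactly two connected
components and `|V| - 2` edges (hence acyclic). -/
def IsSpanning2Forest (src tgt : E → V) [Fintype V] (S : Finset E) : Prop :=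
  nComp src tgt S = 2 ∧ S.card + 2 = Fintype.card V

/-- The edges of `S` with both endpoints in `X` (edge set of the induced subgraph `S[X]`). -/
noncomputable def inducedEdges (src tgt : E → V) (S : Finset E) (X : Finset V) : Finset E :=
  S.filter fun e => src e ∈ X ∧ tgt e ∈ X

/-- The induced subgraph `S[X]` is a (spanning) tree on the vertex set `X`. -/
def IsTreeOn (src tgt : E → V) (X : Finset V) (S : Finset E) : Prop :=
  (inducedEdges src tgt S X).card + 1 = X.card ∧
    ∀ u ∈ X, ∀ v ∈ X, reach src tgt (inducedEdges src tgt S X) u v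

/-- `X` is saturated w.r.t. the (multi)graph with all edges `E`:
the induced subgraph has exactly `2|X| - 2` edges. -/
def Saturated (src tgt : E → V) [Fintype E] (X : Finset V) : Prop :=
  X.Nonempty ∧ (inducedEdges src tgt Finset.univ X).card + 2 = 2 * X.card

/-- The boundary map `∂ : R^E → R^V`, `e ↦ head(e) - tail(e)`. -/
noncomputable def bnd {R : Type*} [Ring R] [Fintype E] (src tgt : E → V) (ω : E → R) : V → R :=
  fun v => ∑ e, ω e * ((if tgt e = v then (1 : R) else 0) - (if src e = v then (1 : R) else 0))

/-- The rows of `M` form an integral basis of `H₁(G, ℤ) = ker (∂ : ℤ^E → ℤ^V)`. -/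
def IsCycleBasis [Fintype E] {h : ℕ} (src tgt : E → V) (M : Fin h → E → ℤ) : Prop :=
  (∀ i, bnd src tgt (M i) = 0) ∧ LinearIndependent ℤ M ∧
    ∀ x : E → ℤ, bnd src tgt x = 0 → x ∈ Submodule.span ℤ (Set.range M)

/-- The real matrix with the same entries as the integer matrix `M`. -/
noncomputable def rmat {h : ℕ} (M : Fin h → E → ℤ) : Matrix (Fin h) E ℝ :=
  Matrix.of fun i e => (M i e : ℝ)

/-!
By Cauchy–Binet, `det (M Y Mᵀ) = ∑_{|S| = h} det (M_S)² ∏_{e ∈ S} y_e`, where `M_S` is the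
square minor on the columns in `S`. If the complement `T` of `S` is a spanning tree, the
fundamental cycles of the edges of `S` with respect to `T` are integer combinations of the rows
of `M` whose restrictions to `S` form the identity matrix, so `M_S` is unimodular. Otherwise
`T`, having `|V| - 1` edges, is disconnected and hence contains a cycle; that cycle is a nonzero
integer combination of the rows of `M` vanishing on `S`, so `det M_S = 0`.
-/

namespace Finset

variable {h : ℕ}

noncomputable def enum (S : {S : Finset E // S.card = h}) (j : Fin h) : E :=
  (S.1.equivFinOfCardEq S.2).symm j

lemma enum_mem (S : {S : Finset E // S.card = h}) (j : Fin h) : enum S j ∈ S.1 :=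
  ((S.1.equivFinOfCardEq S.2).symm j).2

lemma enum_injective (S : {S : Finset E // S.card = h}) : Function.Injective (enum S) :=
  fun _ _ hij => (S.1.equivFinOfCardEq S.2).symm.injective (Subtype.ext hij)

lemma range_enum (S : {S : Finset E // S.card = h}) : Set.range (enum S) = S.1 := by
  ext e
  refine ⟨fun ⟨j, hj⟩ => hj ▸ enum_mem S j, fun he => ⟨S.1.equivFinOfCardEq S.2 ⟨e, he⟩, ?_⟩⟩
  simp [enum]

lemma prod_enum {β : Type*} [CommMonoid β] (S : {S : Finset E // S.card = h}) (f : E → β) :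
    ∏ j, f (enum S j) = ∏ e ∈ S.1, f e := by
  rw [← Finset.prod_coe_sort S.1]
  exact Equiv.prod_comp (S.1.equivFinOfCardEq S.2).symm (fun e => f e)

lemma enum_comp_perm_injective :
    Function.Injective
      fun p : {S : Finset E // S.card = h} × Equiv.Perm (Fin h) => enum p.1 ∘ p.2 := by
  rintro ⟨S, σ⟩ ⟨S', σ'⟩ hg
  obtain rfl : S = S' := Subtype.ext <| by
    simpa [Set.range_comp, range_enum] using congrArg Set.range hg
  simpa using Equiv.ext fun j => enum_injective S (congrFun hg j)

lemma exists_enum_comp_perm_eq {g : Fin h → E} (hg : Function.Injective g) :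
    ∃ p : {S : Finset E // S.card = h} × Equiv.Perm (Fin h), enum p.1 ∘ p.2 = g := by
  let S : {S : Finset E // S.card = h} :=
    ⟨univ.image g, by rw [card_image_of_injective _ hg, card_univ, Fintype.card_fin]⟩
  let g' : Fin h → S.1 := fun j => ⟨g j, mem_image_of_mem g (mem_univ j)⟩
  have hg' : Function.Bijective g' := by
    rw [Fintype.bijective_iff_injective_and_card]
    exact ⟨fun i j hij => hg (congrArg Subtype.val hij), by simp [S.2]⟩
  refine ⟨(S, (Equiv.ofBijective g' hg').trans (S.1.equivFinOfCardEq S.2)), ?_⟩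
  funext j
  simp [enum, g']

end Finset

namespace Matrix

open Finset

variable {R : Type*} [CommRing R] [Fintype E] {h : ℕ}

lemma det_mul_eq_sum_prod_mul_det_submatrix (A : Matrix (Fin h) E R) (B : Matrix E (Fin h) R) :
    (A * B).det = ∑ g : Fin h → E, (∏ i, B (g i) i) * (A.submatrix id g).det := by
  simp only [det_apply', mul_apply, prod_univ_sum, mul_sum, Fintype.piFinset_univ]
  rw [Finset.sum_comm]
  refine sum_congr rfl fun g _ => sum_congr rfl fun σ _ => ?_
  simp only [submatrix_apply, id, prod_mul_distrib]
  ring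

/-- The Cauchy–Binet formula. -/
theorem det_mul_eq_sum_det_mul_det (A : Matrix (Fin h) E R) (B : Matrix E (Fin h) R) :
    (A * B).det = ∑ S : {S : Finset E // S.card = h},
      (A.submatrix id (enum S)).det * (B.submatrix (enum S) id).det := by
  rw [det_mul_eq_sum_prod_mul_det_submatrix]
  symm
  calc
    _ = ∑ p : {S : Finset E // S.card = h} × Equiv.Perm (Fin h),
        (∏ i, B (enum p.1 (p.2 i)) i) * (A.submatrix id (enum p.1 ∘ p.2)).det := by
      rw [Fintype.sum_prod_type]
      refine sum_congr rfl fun S _ => ?_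
      rw [det_apply' (B.submatrix _ _), mul_sum]
      refine sum_congr rfl fun σ _ => ?_
      rw [show A.submatrix id (enum S ∘ σ) = (A.submatrix id (enum S)).submatrix id σ from rfl,
        det_permute']
      simp only [submatrix_apply, id]
      ring
    _ = _ := by
      -- every injective `g` is `enum S ∘ σ` for exactly one `(S, σ)`; the others give a zero minor
      refine Fintype.sum_of_injective _ enum_comp_perm_injective _ _ (fun g hg => ?_) fun _ => rfl
      have hni : ¬ Function.Injective g := fun hinj => hg (exists_enum_comp_perm_eq hinj)
      obtain ⟨i, j, hij, hne⟩ := Function.not_injective_iff.1 hni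
      rw [det_zero_of_column_eq hne (fun k => by simp [hij]), mul_zero]

theorem det_mul_diagonal_mul_transpose (A : Matrix (Fin h) E R) (y : E → R) :
    (A * diagonal y * Aᵀ).det = ∑ S : {S : Finset E // S.card = h},
      (A.submatrix id (enum S)).det ^ 2 * ∏ e ∈ S.1, y e := by
  rw [Matrix.mul_assoc, det_mul_eq_sum_det_mul_det]
  refine sum_congr rfl fun S _ => ?_
  have : (diagonal y * Aᵀ).submatrix (enum S) id =
      of fun i j => y (enum S i) * (A.submatrix id (enum S))ᵀ i j := by
    ext i j
    simp [diagonal_mul]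
  rw [this, det_mul_column, det_transpose, prod_enum]
  ring

end Matrix

section Reach

variable {src tgt : E → V} {S S' : Finset E} {u v : V}

lemma reach_mono (hSS : S ⊆ S') (h : reach src tgt S u v) : reach src tgt S' u v :=
  Relation.EqvGen.mono (fun _ _ ⟨e, he, hor⟩ => ⟨e, hSS he, hor⟩) _ _ h

lemma reach_of_mem {e : E} (he : e ∈ S) : reach src tgt S (src e) (tgt e) :=
  .rel _ _ ⟨e, he, .inl ⟨rfl, rfl⟩⟩

lemma reach_of_nComp_eq_one (hS : nComp src tgt S = 1) (u v : V) : reach src tgt S u v := by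
  have := (Nat.card_eq_one_iff_unique.1 hS).1
  exact Quotient.exact (Subsingleton.elim (⟦u⟧ : Quotient (Relation.EqvGen.setoid _)) ⟦v⟧)

lemma nComp_le_card [Fintype V] (S : Finset E) : nComp src tgt S ≤ Fintype.card V := by
  rw [← Nat.card_eq_fintype_card]
  exact Nat.card_le_card_of_surjective _ Quotient.mk_surjective

lemma nComp_insert_lt [Finite V] {e : E} (he : ¬ reach src tgt S (src e) (tgt e)) :
    nComp src tgt (insert e S) < nComp src tgt S := by
  have := Fintype.ofFinite V
  let q := Quotient.map (sa := Relation.EqvGen.setoid (adjRel src tgt S))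
    (sb := Relation.EqvGen.setoid (adjRel src tgt (insert e S))) id
    (fun _ _ => reach_mono (subset_insert e S))
  have hq : Function.Surjective q := Quotient.map_surjective _ Function.surjective_id
  have hnq : ¬ Function.Injective q := fun hinj =>
    he (Quotient.exact (hinj (Quotient.sound (reach_of_mem (mem_insert_self e S)))))
  simpa [nComp, Nat.card_eq_fintype_card] using Fintype.card_lt_of_surjective_not_injective q hq hnq

lemma nComp_pos [Finite V] [Nonempty V] (src tgt : E → V) (S : Finset E) :
    0 < nComp src tgt S :=
  have := ‹Nonempty V›.map (Quotient.mk (Relation.EqvGen.setoid (adjRel src tgt S)))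
  Nat.card_pos

end Reach

def IsAcyclic (src tgt : E → V) (S : Finset E) : Prop :=
  ∀ e ∈ S, ¬ reach src tgt (S.erase e) (src e) (tgt e)

lemma IsAcyclic.subset {src tgt : E → V} {S S' : Finset E} (h : IsAcyclic src tgt S')
    (hSS : S ⊆ S') : IsAcyclic src tgt S := fun e he hr =>
  h e (hSS he) (reach_mono (erase_subset_erase e hSS) hr)

lemma IsAcyclic.card_add_nComp_le [Fintype V] {src tgt : E → V} {S : Finset E}
    (h : IsAcyclic src tgt S) : S.card + nComp src tgt S ≤ Fintype.card V := by
  induction S using Finset.induction_on with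
  | empty => simpa using nComp_le_card ∅
  | @insert e S he ih =>
    have hlt : nComp src tgt (insert e S) < nComp src tgt S := nComp_insert_lt <| by
      simpa [erase_insert he] using h e (mem_insert_self e S)
    have := ih (h.subset (subset_insert e S))
    rw [card_insert_of_notMem he]
    omega

section Flow

variable [Fintype E] {src tgt : E → V}

lemma bnd_add {R : Type*} [Ring R] (x y : E → R) :
    bnd src tgt (x + y) = bnd src tgt x + bnd src tgt y := by
  funext v
  simp [bnd, add_mul, sum_add_distrib]

lemma bnd_neg {R : Type*} [Ring R] (x : E → R) : bnd src tgt (-x) = -bnd src tgt x := by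
  funext v
  simp [bnd]

lemma bnd_single {R : Type*} [Ring R] (e : E) :
    bnd src tgt (Pi.single e 1 : E → R) = Pi.single (tgt e) 1 - Pi.single (src e) 1 := by
  funext v
  simp [bnd, Pi.single_apply, eq_comm]

lemma exists_flow_of_reach {S : Finset E} {u v : V} (h : reach src tgt S u v) :
    ∃ x : E → ℤ, (∀ f ∉ S, x f = 0) ∧ bnd src tgt x = Pi.single v 1 - Pi.single u 1 := by
  induction h with
  | rel a b hab =>
    obtain ⟨e, he, ⟨rfl, rfl⟩ | ⟨rfl, rfl⟩⟩ := hab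
    · exact ⟨Pi.single e 1, fun f hf => Pi.single_eq_of_ne (ne_of_mem_of_not_mem he hf).symm _,
        bnd_single e⟩
    · refine ⟨-Pi.single e 1, fun f hf => ?_, by rw [bnd_neg, bnd_single, neg_sub]⟩
      simp [Pi.single_eq_of_ne (ne_of_mem_of_not_mem he hf).symm]
  | refl a => exact ⟨0, fun _ _ => rfl, by funext; simp [bnd]⟩
  | symm a b _ ih =>
    obtain ⟨x, hx, hbx⟩ := ih
    exact ⟨-x, fun f hf => by simp [hx f hf], by rw [bnd_neg, hbx, neg_sub]⟩
  | trans a b c _ _ ih₁ ih₂ =>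
    obtain ⟨x, hx, hbx⟩ := ih₁
    obtain ⟨y, hy, hby⟩ := ih₂
    exact ⟨x + y, fun f hf => by simp [hx f hf, hy f hf], by rw [bnd_add, hbx, hby]; abel⟩

lemma exists_cycle_of_reach {S : Finset E} {e : E} (he : e ∉ S)
    (h : reach src tgt S (tgt e) (src e)) :
    ∃ x : E → ℤ, bnd src tgt x = 0 ∧ x e = 1 ∧ ∀ f ∉ insert e S, x f = 0 := by
  obtain ⟨p, hp, hbp⟩ := exists_flow_of_reach h
  refine ⟨Pi.single e 1 + p, by rw [bnd_add, bnd_single, hbp]; abel, by simp [hp e he],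
    fun f hf => ?_⟩
  rw [mem_insert, not_or] at hf
  simp [Pi.single_eq_of_ne hf.1, hp f hf.2]

end Flow

section CycleMinors

variable [Fintype E] {src tgt : E → V} {h : ℕ} {M : Fin h → E → ℤ}

lemma isUnit_det_of_reach
    (hM : ∀ x, bnd src tgt x = 0 → x ∈ Submodule.span ℤ (Set.range M))
    {T : Finset E} (hT : ∀ u v, reach src tgt T u v) {s : Fin h → E}
    (hs : Function.Injective s) (hsT : ∀ j, s j ∉ T) :
    IsUnit (of fun i j => M i (s j)).det := by
  have hcyc : ∀ j, ∃ c : Fin h → ℤ, ∀ k, ∑ i, c i * M i (s k) = if j = k then 1 else 0 := by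
    intro j
    obtain ⟨x, hx, hxj, hx0⟩ := exists_cycle_of_reach (hsT j) (hT _ _)
    obtain ⟨c, rfl⟩ := (Submodule.mem_span_range_iff_exists_fun ℤ).1 (hM x hx)
    refine ⟨c, fun k => ?_⟩
    have hsum : ∑ i, c i * M i (s k) = (∑ i, c i • M i) (s k) := by simp
    split_ifs with hjk
    · rw [hsum, ← hjk, hxj]
    · rw [hsum, hx0 _ (by simp [hs.ne (Ne.symm hjk), hsT k])]
  choose c hc using hcyc
  refine isUnit_det_of_left_inverse (B := of c) ?_
  ext j k
  simp [mul_apply, hc, one_apply]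

lemma det_eq_zero_of_not_isAcyclic
    (hM : ∀ x, bnd src tgt x = 0 → x ∈ Submodule.span ℤ (Set.range M))
    {F : Finset E} (hF : ¬ IsAcyclic src tgt F) {s : Fin h → E} (hsF : ∀ j, s j ∉ F) :
    (of fun i j => M i (s j)).det = 0 := by
  obtain ⟨e, heF, hre⟩ : ∃ e ∈ F, reach src tgt (F.erase e) (src e) (tgt e) := by
    simpa [IsAcyclic] using hF
  obtain ⟨x, hx, hxe, hx0⟩ := exists_cycle_of_reach (notMem_erase e F) (.symm _ _ hre)
  rw [insert_erase heF] at hx0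
  obtain ⟨c, rfl⟩ := (Submodule.mem_span_range_iff_exists_fun ℤ).1 (hM x hx)
  refine exists_vecMul_eq_zero_iff.1 ⟨c, fun hc => by simp [hc] at hxe, ?_⟩
  ext j
  simpa [vecMul, dotProduct] using hx0 (s j) (hsF j)

end CycleMinors

lemma det_rmat_submatrix_enum_sq [Fintype V] [Fintype E] {src tgt : E → V} {h : ℕ}
    (hh : h + Fintype.card V = Fintype.card E + 1) {M : Fin h → E → ℤ}
    (hM : ∀ x, bnd src tgt x = 0 → x ∈ Submodule.span ℤ (Set.range M))
    (S : {S : Finset E // S.card = h}) :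
    ((rmat M).submatrix id (enum S)).det ^ 2 = if IsSpanningTree src tgt S.1ᶜ then 1 else 0 := by
  have hcast :
      ((rmat M).submatrix id (enum S)).det = ((of fun i j => M i (enum S j)).det : ℝ) := by
    rw [Int.cast_det]
    rfl
  have hcard : S.1ᶜ.card + 1 = Fintype.card V := by
    have := card_le_univ S.1
    rw [card_compl, S.2]
    omega
  have hsS : ∀ j, enum S j ∉ S.1ᶜ := fun j => by simpa using enum_mem S j
  split_ifs with hT
  · have hunit := isUnit_det_of_reach hM (reach_of_nComp_eq_one hT.1) (enum_injective S) hsS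
    rw [hcast, ← Int.cast_pow, Int.isUnit_sq hunit, Int.cast_one]
  · have : Nonempty V := Fintype.card_pos_iff.1 (by omega)
    have hcyc : ¬ IsAcyclic src tgt S.1ᶜ := fun hac => by
      have := hac.card_add_nComp_le
      have := nComp_pos src tgt S.1ᶜ
      exact hT ⟨by omega, hcard⟩
    rw [hcast, det_eq_zero_of_not_isAcyclic hM hcyc hsS, Int.cast_zero, zero_pow two_ne_zero]

theorem stmt_9_general [Fintype V] [Fintype E] (src tgt : E → V)
    {h : ℕ} (hh : h + Fintype.card V = Fintype.card E + 1)
    (M : Fin h → E → ℤ) (hM : IsCycleBasis src tgt M)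
    (y : E → ℝ) :
    (rmat M * Matrix.diagonal y * (rmat M)ᵀ).det =
      ∑ T : {T : Finset E // IsSpanningTree src tgt T}, ∏ e ∈ (T.1)ᶜ, y e := by
  simp only [det_mul_diagonal_mul_transpose, det_rmat_submatrix_enum_sq hh hM.2.2, ite_mul,
    one_mul, zero_mul]
  rw [← sum_filter]
  refine sum_bij' (fun S hS => ⟨S.1ᶜ, (mem_filter.1 hS).2⟩)
    (fun T _ => ⟨T.1ᶜ, ?_⟩) (by simp) (by simp) (by simp) (by simp) (by simp)
  have hT := T.2.2
  have hcard := card_le_univ T.1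
  rw [card_compl]
  omega

/-- `det (M Y Mᵀ)` is the first Symanzik polynomial:
the sum over spanning trees `T` of `∏_{e ∉ T} y_e`. -/
theorem stmt_9 [Fintype V] [Fintype E] (src tgt : E → V)
    (hconn : nComp src tgt (Finset.univ : Finset E) = 1)
    {h : ℕ} (hh : h + Fintype.card V = Fintype.card E + 1)
    (M : Fin h → E → ℤ) (hM : IsCycleBasis src tgt M)
    (y : E → ℝ) :
    (rmat M * Matrix.diagonal y * (rmat M)ᵀ).det =
      ∑ T : {T : Finset E // IsSpanningTree src tgt T}, ∏ e ∈ (T.1)ᶜ, y e :=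
  stmt_9_general src tgt hh M hM y
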